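/- Assume Q ⪯ 0. Suppose there exist a matrix 𝒢 ∈ ℝ^{N×(n+m)} with [X; U]·𝒢 = I_{n+m}, a symmetric positive definite P ∈ ℝ^{n×n}, and a scalar τ > 0 such that Fᵀ Θ F ≺ 0 (negative definite), where F ∈ ℝ^{(2n+m+p+m_w+N)×(n+m+m_w)} is the block matrix with row blocks [I_n, 0, 0], [X₊𝒢 (as an n×(n+m) block), −B_w], [0, I_m, 0], [C, D, 0], [0, 0, I_{m_w}], [𝒢 (as an N×(n+m) block), 0], and Θ is the block-diagonal matrix diag( [[−P, 0],[0, P]], [[−R, −Sᵀ],[−S, −Q]], τ·[[Q_w, S_w],[S_wᵀ, R_w]] ) matching these row blocks. Then every (A_d, B_d) ∈ Σ_{X,U} is such that the system x_{k+1} = A_d x_k + B_d u_k, y_k = C x_k + D u_k is (Q,S,R)-dissipative. -/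

import Mathlib

open Matrix

/-- `M ≺ 0`: a real matrix is negative definite iff `-M` is positive definite. -/
def Matrix.NegDef {k : Type*} [Fintype k] (M : Matrix k k ℝ) : Prop :=
  (-M).PosDef

/-- `M ⪯ 0`: a real matrix is negative semidefinite iff `-M` is positive semidefinite. -/
def Matrix.NegSemidef {k : Type*} [Fintype k] (M : Matrix k k ℝ) : Prop :=
  (-M).PosSemidef

/-- Quadratic supply rate `s(u,y) = uᵀRu + uᵀSᵀy + yᵀSu + yᵀQy`. -/
noncomputable def supplyRate {m p : ℕ} (R : Matrix (Fin m) (Fin m) ℝ)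
    (S : Matrix (Fin p) (Fin m) ℝ) (Q : Matrix (Fin p) (Fin p) ℝ)
    (u : Fin m → ℝ) (y : Fin p → ℝ) : ℝ :=
  u ⬝ᵥ R.mulVec u + u ⬝ᵥ Sᵀ.mulVec y + y ⬝ᵥ S.mulVec u + y ⬝ᵥ Q.mulVec y

/-- Membership in the noise set `𝒲`. -/
def inNoiseSet {mw N : ℕ} (Qw : Matrix (Fin mw) (Fin mw) ℝ)
    (Sw : Matrix (Fin mw) (Fin N) ℝ) (Rw : Matrix (Fin N) (Fin N) ℝ)
    (W : Matrix (Fin mw) (Fin N) ℝ) : Prop :=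
  (Wᵀ * Qw * W + Wᵀ * Sw + Swᵀ * W + Rw).PosSemidef

/-- Membership `(A_d, B_d) ∈ Σ_{X,U}`. -/
def inConsistentSet {n m mw N : ℕ}
    (X Xp : Matrix (Fin n) (Fin N) ℝ) (U : Matrix (Fin m) (Fin N) ℝ)
    (Bw : Matrix (Fin n) (Fin mw) ℝ)
    (Qw : Matrix (Fin mw) (Fin mw) ℝ) (Sw : Matrix (Fin mw) (Fin N) ℝ)
    (Rw : Matrix (Fin N) (Fin N) ℝ)
    (Ad : Matrix (Fin n) (Fin n) ℝ) (Bd : Matrix (Fin n) (Fin m) ℝ) : Prop :=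
  ∃ W : Matrix (Fin mw) (Fin N) ℝ,
    inNoiseSet Qw Sw Rw W ∧ Xp = Ad * X + Bd * U + Bw * W

/-- The outer factor `F` of the robust-performance LMI, with row blocks
`[I 0 0]`, `[X₊𝒢 −B_w]`, `[0 I 0]`, `[C D 0]`, `[0 0 I]`, `[𝒢 0]`. -/
noncomputable def outerFactor {n m p mw N : ℕ}
    (C : Matrix (Fin p) (Fin n) ℝ) (D : Matrix (Fin p) (Fin m) ℝ)
    (Xp : Matrix (Fin n) (Fin N) ℝ) (Bw : Matrix (Fin n) (Fin mw) ℝ)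
    (G : Matrix (Fin N) (Fin n ⊕ Fin m) ℝ) :
    Matrix ((Fin n ⊕ Fin n) ⊕ ((Fin m ⊕ Fin p) ⊕ (Fin mw ⊕ Fin N)))
      ((Fin n ⊕ Fin m) ⊕ Fin mw) ℝ :=
  Matrix.fromRows
    (Matrix.fromRows
      (Matrix.fromCols
        (Matrix.fromCols (1 : Matrix (Fin n) (Fin n) ℝ)
          (0 : Matrix (Fin n) (Fin m) ℝ)) (0 : Matrix (Fin n) (Fin mw) ℝ))
      (Matrix.fromCols (Xp * G) (-Bw)))
    (Matrix.fromRows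
      (Matrix.fromRows
        (Matrix.fromCols
          (Matrix.fromCols (0 : Matrix (Fin m) (Fin n) ℝ)
            (1 : Matrix (Fin m) (Fin m) ℝ)) (0 : Matrix (Fin m) (Fin mw) ℝ))
        (Matrix.fromCols (Matrix.fromCols C D)
          (0 : Matrix (Fin p) (Fin mw) ℝ)))
      (Matrix.fromRows
        (Matrix.fromCols (0 : Matrix (Fin mw) (Fin n ⊕ Fin m) ℝ)
          (1 : Matrix (Fin mw) (Fin mw) ℝ))
        (Matrix.fromCols G (0 : Matrix (Fin N) (Fin mw) ℝ))))

/-- The inner block-diagonal matrix `Θ` of the robust-performance LMI: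
`diag([[−P,0],[0,P]], [[−R,−Sᵀ],[−S,−Q]], τ·[[Q_w,S_w],[S_wᵀ,R_w]])`. -/
noncomputable def innerMatrix {n m p mw N : ℕ}
    (P : Matrix (Fin n) (Fin n) ℝ)
    (R : Matrix (Fin m) (Fin m) ℝ) (S : Matrix (Fin p) (Fin m) ℝ)
    (Q : Matrix (Fin p) (Fin p) ℝ)
    (Qw : Matrix (Fin mw) (Fin mw) ℝ) (Sw : Matrix (Fin mw) (Fin N) ℝ)
    (Rw : Matrix (Fin N) (Fin N) ℝ) (τ : ℝ) :
    Matrix ((Fin n ⊕ Fin n) ⊕ ((Fin m ⊕ Fin p) ⊕ (Fin mw ⊕ Fin N)))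
      ((Fin n ⊕ Fin n) ⊕ ((Fin m ⊕ Fin p) ⊕ (Fin mw ⊕ Fin N))) ℝ :=
  Matrix.fromBlocks (Matrix.fromBlocks (-P) 0 0 P) 0 0
    (Matrix.fromBlocks (Matrix.fromBlocks (-R) (-Sᵀ) (-S) (-Q)) 0 0
      (τ • Matrix.fromBlocks Qw Sw Swᵀ Rw))

/-!
Take the storage function `V x = xᵀ P x`. Since `[X; U] 𝒢 = I` and `X₊ = A_d X + B_d U + B_w W`,
the matrix `X₊ 𝒢` equals `[A_d B_d] + B_w W 𝒢`. Hence evaluating the quadratic form `Fᵀ Θ F` at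
`ξ = (x, u, W 𝒢 (x; u))` gives `F ξ = (x, A_d x + B_d u, u, y, W 𝒢 (x; u), 𝒢 (x; u))`, and
`ξᵀ Fᵀ Θ F ξ ≤ 0` reads `V(x⁺) - V(x) - s(u, y) + τ · q ≤ 0`, where `q ≥ 0` is the quadratic form
defining `W ∈ 𝒲` evaluated at `𝒢 (x; u)`. This one-step dissipation inequality telescopes.
-/

theorem sub_le_sum_Ico_of_forall_sub_le {β : Type*} [AddCommGroup β] [PartialOrder β]
    [IsOrderedAddMonoid β] (f s : ℕ → β) (h : ∀ k, f (k + 1) - f k ≤ s k) {k₂ k₁ : ℕ}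
    (hk : k₂ ≤ k₁) : f k₁ - f k₂ ≤ ∑ i ∈ Finset.Ico k₂ k₁, s i := by
  rw [← Finset.sum_Ico_sub f hk]
  exact Finset.sum_le_sum fun k _ => h k

theorem Matrix.NegDef.dotProduct_mulVec_nonpos {k : Type*} [Fintype k] {M : Matrix k k ℝ}
    (hM : M.NegDef) (v : k → ℝ) : v ⬝ᵥ M *ᵥ v ≤ 0 := by
  have h := hM.posSemidef.dotProduct_mulVec_nonneg v
  simp only [star_trivial, neg_mulVec, dotProduct_neg] at h
  linarith

theorem Matrix.dotProduct_transpose_mul_mul_mulVec {α ι κ : Type*} [CommSemiring α]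
    [Fintype ι] [Fintype κ] (F : Matrix κ ι α) (Θ : Matrix κ κ α) (v : ι → α) :
    v ⬝ᵥ (Fᵀ * Θ * F) *ᵥ v = (F *ᵥ v) ⬝ᵥ Θ *ᵥ (F *ᵥ v) := by
  rw [Matrix.mul_assoc, ← mulVec_mulVec, dotProduct_transpose_mulVec, dotProduct_comm,
    ← mulVec_mulVec]

theorem inNoiseSet.dotProduct_mulVec_nonneg {mw N : ℕ} {Qw : Matrix (Fin mw) (Fin mw) ℝ}
    {Sw : Matrix (Fin mw) (Fin N) ℝ} {Rw : Matrix (Fin N) (Fin N) ℝ}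
    {W : Matrix (Fin mw) (Fin N) ℝ} (hW : inNoiseSet Qw Sw Rw W) (g : Fin N → ℝ) :
    0 ≤ Sum.elim (W *ᵥ g) g ⬝ᵥ fromBlocks Qw Sw Swᵀ Rw *ᵥ Sum.elim (W *ᵥ g) g := by
  have hcongr : Wᵀ * Qw * W + Wᵀ * Sw + Swᵀ * W + Rw
      = (fromRows W (1 : Matrix (Fin N) (Fin N) ℝ))ᵀ * fromBlocks Qw Sw Swᵀ Rw
        * fromRows W (1 : Matrix (Fin N) (Fin N) ℝ) := by
    simp only [transpose_fromRows, transpose_one, fromCols_mul_fromBlocks, fromCols_mul_fromRows,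
      Matrix.one_mul, Matrix.mul_one, Matrix.add_mul, Matrix.mul_assoc]
    abel
  have h := PosSemidef.dotProduct_mulVec_nonneg hW g
  rwa [star_trivial, hcongr, dotProduct_transpose_mul_mul_mulVec, fromRows_mulVec,
    one_mulVec] at h

theorem mul_eq_fromCols_add_of_fromRows_mul_eq_one {α n m mw N : Type*} [Semiring α]
    [Fintype n] [Fintype m] [Fintype mw] [Fintype N] [DecidableEq n] [DecidableEq m]
    {X Xp : Matrix n N α} {U : Matrix m N α} {Bw : Matrix n mw α} {W : Matrix mw N α}
    {G : Matrix N (n ⊕ m) α} {Ad : Matrix n n α} {Bd : Matrix n m α}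
    (hG : fromRows X U * G = 1) (hXp : Xp = Ad * X + Bd * U + Bw * W) :
    Xp * G = fromCols Ad Bd + Bw * W * G := by
  rw [hXp, ← fromCols_mul_fromRows, Matrix.add_mul, Matrix.mul_assoc, hG, Matrix.mul_one]

theorem outerFactor_mulVec {n m p mw N : ℕ} (C : Matrix (Fin p) (Fin n) ℝ)
    (D : Matrix (Fin p) (Fin m) ℝ) (Xp : Matrix (Fin n) (Fin N) ℝ)
    (Bw : Matrix (Fin n) (Fin mw) ℝ) (G : Matrix (Fin N) (Fin n ⊕ Fin m) ℝ)
    {W : Matrix (Fin mw) (Fin N) ℝ} {Ad : Matrix (Fin n) (Fin n) ℝ}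
    {Bd : Matrix (Fin n) (Fin m) ℝ} (hXpG : Xp * G = fromCols Ad Bd + Bw * W * G)
    (x : Fin n → ℝ) (u : Fin m → ℝ) :
    outerFactor C D Xp Bw G *ᵥ Sum.elim (Sum.elim x u) (W *ᵥ G *ᵥ Sum.elim x u)
      = Sum.elim (Sum.elim x (Ad *ᵥ x + Bd *ᵥ u))
          (Sum.elim (Sum.elim u (C *ᵥ x + D *ᵥ u))
            (Sum.elim (W *ᵥ G *ᵥ Sum.elim x u) (G *ᵥ Sum.elim x u))) := by
  simp only [outerFactor, fromRows_mulVec, fromCols_mulVec_sumElim, zero_mulVec, one_mulVec,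
    hXpG, add_mulVec, ← mulVec_mulVec, neg_mulVec, add_zero, zero_add, add_neg_cancel_right]

theorem sumElim_dotProduct_innerMatrix_mulVec {n m p mw N : ℕ} (P : Matrix (Fin n) (Fin n) ℝ)
    (R : Matrix (Fin m) (Fin m) ℝ) (S : Matrix (Fin p) (Fin m) ℝ) (Q : Matrix (Fin p) (Fin p) ℝ)
    (Qw : Matrix (Fin mw) (Fin mw) ℝ) (Sw : Matrix (Fin mw) (Fin N) ℝ)
    (Rw : Matrix (Fin N) (Fin N) ℝ) (τ : ℝ) (x x' : Fin n → ℝ) (u : Fin m → ℝ) (y : Fin p → ℝ)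
    (η : Fin mw ⊕ Fin N → ℝ) :
    Sum.elim (Sum.elim x x') (Sum.elim (Sum.elim u y) η) ⬝ᵥ innerMatrix P R S Q Qw Sw Rw τ
        *ᵥ Sum.elim (Sum.elim x x') (Sum.elim (Sum.elim u y) η)
      = x' ⬝ᵥ P *ᵥ x' - x ⬝ᵥ P *ᵥ x - supplyRate R S Q u y
        + τ * (η ⬝ᵥ fromBlocks Qw Sw Swᵀ Rw *ᵥ η) := by
  simp only [innerMatrix, supplyRate, fromBlocks_mulVec, Sum.elim_comp_inl, Sum.elim_comp_inr,
    neg_mulVec, zero_mulVec, smul_mulVec, add_zero, zero_add, sumElim_dotProduct_sumElim,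
    dotProduct_neg, dotProduct_add, dotProduct_smul, smul_eq_mul]
  ring

theorem quadratic_storage_step_le {n m p mw N : ℕ}
    (C : Matrix (Fin p) (Fin n) ℝ) (D : Matrix (Fin p) (Fin m) ℝ)
    (R : Matrix (Fin m) (Fin m) ℝ) (S : Matrix (Fin p) (Fin m) ℝ) (Q : Matrix (Fin p) (Fin p) ℝ)
    {X Xp : Matrix (Fin n) (Fin N) ℝ} {U : Matrix (Fin m) (Fin N) ℝ}
    {Bw : Matrix (Fin n) (Fin mw) ℝ} {Qw : Matrix (Fin mw) (Fin mw) ℝ}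
    {Sw : Matrix (Fin mw) (Fin N) ℝ} {Rw : Matrix (Fin N) (Fin N) ℝ}
    {G : Matrix (Fin N) (Fin n ⊕ Fin m) ℝ} (hG : fromRows X U * G = 1)
    {P : Matrix (Fin n) (Fin n) ℝ} {τ : ℝ} (hτ : 0 < τ)
    (hLMI : ((outerFactor C D Xp Bw G)ᵀ * innerMatrix P R S Q Qw Sw Rw τ
        * outerFactor C D Xp Bw G).NegDef)
    {Ad : Matrix (Fin n) (Fin n) ℝ} {Bd : Matrix (Fin n) (Fin m) ℝ}
    {W : Matrix (Fin mw) (Fin N) ℝ} (hW : inNoiseSet Qw Sw Rw W)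
    (hXp : Xp = Ad * X + Bd * U + Bw * W) (x : Fin n → ℝ) (u : Fin m → ℝ) :
    (Ad *ᵥ x + Bd *ᵥ u) ⬝ᵥ P *ᵥ (Ad *ᵥ x + Bd *ᵥ u) - x ⬝ᵥ P *ᵥ x
      ≤ supplyRate R S Q u (C *ᵥ x + D *ᵥ u) := by
  have hLMI_at := hLMI.dotProduct_mulVec_nonpos
    (Sum.elim (Sum.elim x u) (W *ᵥ G *ᵥ Sum.elim x u))
  rw [dotProduct_transpose_mul_mul_mulVec,
    outerFactor_mulVec C D Xp Bw G (mul_eq_fromCols_add_of_fromRows_mul_eq_one hG hXp),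
    sumElim_dotProduct_innerMatrix_mulVec] at hLMI_at
  have hnoise := mul_nonneg hτ.le (hW.dotProduct_mulVec_nonneg (G *ᵥ Sum.elim x u))
  linarith

theorem robust_lmi_implies_robust_dissipativity_general {n m p mw N : ℕ}
    (C : Matrix (Fin p) (Fin n) ℝ) (D : Matrix (Fin p) (Fin m) ℝ)
    (R : Matrix (Fin m) (Fin m) ℝ) (S : Matrix (Fin p) (Fin m) ℝ)
    (Q : Matrix (Fin p) (Fin p) ℝ)
    (X Xp : Matrix (Fin n) (Fin N) ℝ) (U : Matrix (Fin m) (Fin N) ℝ)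
    (Bw : Matrix (Fin n) (Fin mw) ℝ)
    (Qw : Matrix (Fin mw) (Fin mw) ℝ) (Sw : Matrix (Fin mw) (Fin N) ℝ)
    (Rw : Matrix (Fin N) (Fin N) ℝ)
    (G : Matrix (Fin N) (Fin n ⊕ Fin m) ℝ)
    (hG : Matrix.fromRows X U * G = 1)
    (P : Matrix (Fin n) (Fin n) ℝ)
    (τ : ℝ) (hτ : 0 < τ)
    (hLMI : ((outerFactor C D Xp Bw G)ᵀ * innerMatrix P R S Q Qw Sw Rw τ
        * outerFactor C D Xp Bw G).NegDef) :
    ∀ (Ad : Matrix (Fin n) (Fin n) ℝ) (Bd : Matrix (Fin n) (Fin m) ℝ),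
      inConsistentSet X Xp U Bw Qw Sw Rw Ad Bd →
      ∃ V : (Fin n → ℝ) → ℝ,
        ∀ (u : ℕ → Fin m → ℝ) (x : ℕ → Fin n → ℝ),
          (∀ k : ℕ, x (k + 1) = Ad.mulVec (x k) + Bd.mulVec (u k)) →
          ∀ k₂ k₁ : ℕ, k₂ < k₁ →
            V (x k₁) - V (x k₂)
              ≤ ∑ i ∈ Finset.Ico k₂ k₁,
                  supplyRate R S Q (u i) (C.mulVec (x i) + D.mulVec (u i)) := by
  rintro Ad Bd ⟨W, hW, hXp⟩
  refine ⟨fun v => v ⬝ᵥ P *ᵥ v, fun u x hdyn k₂ k₁ hk => ?_⟩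
  refine sub_le_sum_Ico_of_forall_sub_le (fun k => x k ⬝ᵥ P *ᵥ x k) _ (fun k => ?_) hk.le
  rw [hdyn k]
  exact quadratic_storage_step_le C D R S Q hG hτ hLMI hW hXp (x k) (u k)

theorem robust_lmi_implies_robust_dissipativity {n m p mw N : ℕ}
    (C : Matrix (Fin p) (Fin n) ℝ) (D : Matrix (Fin p) (Fin m) ℝ)
    (R : Matrix (Fin m) (Fin m) ℝ) (S : Matrix (Fin p) (Fin m) ℝ)
    (Q : Matrix (Fin p) (Fin p) ℝ) (hR : R.IsSymm) (hQ : Q.IsSymm)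
    (hQneg : Q.NegSemidef)
    (X Xp : Matrix (Fin n) (Fin N) ℝ) (U : Matrix (Fin m) (Fin N) ℝ)
    (Bw : Matrix (Fin n) (Fin mw) ℝ)
    (Qw : Matrix (Fin mw) (Fin mw) ℝ) (Sw : Matrix (Fin mw) (Fin N) ℝ)
    (Rw : Matrix (Fin N) (Fin N) ℝ) (hQw : Qw.IsSymm) (hRw : Rw.PosDef)
    (G : Matrix (Fin N) (Fin n ⊕ Fin m) ℝ)
    (hG : Matrix.fromRows X U * G = 1)
    (P : Matrix (Fin n) (Fin n) ℝ) (hP : P.PosDef)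
    (τ : ℝ) (hτ : 0 < τ)
    (hLMI : ((outerFactor C D Xp Bw G)ᵀ * innerMatrix P R S Q Qw Sw Rw τ
        * outerFactor C D Xp Bw G).NegDef) :
    ∀ (Ad : Matrix (Fin n) (Fin n) ℝ) (Bd : Matrix (Fin n) (Fin m) ℝ),
      inConsistentSet X Xp U Bw Qw Sw Rw Ad Bd →
      ∃ V : (Fin n → ℝ) → ℝ,
        ∀ (u : ℕ → Fin m → ℝ) (x : ℕ → Fin n → ℝ),
          (∀ k : ℕ, x (k + 1) = Ad.mulVec (x k) + Bd.mulVec (u k)) →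
          ∀ k₂ k₁ : ℕ, k₂ < k₁ →
            V (x k₁) - V (x k₂)
              ≤ ∑ i ∈ Finset.Ico k₂ k₁,
                  supplyRate R S Q (u i) (C.mulVec (x i) + D.mulVec (u i)) :=
  robust_lmi_implies_robust_dissipativity_general C D R S Q X Xp U Bw Qw Sw Rw G hG P τ hτ hLMI
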